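/- Weighted envy-freeness bound for DRF-MT allocations: suppose agent j's allocation x_j satisfies Σ_{r∈g_l^j} x_{jr} = y_j · w_{j*} · d_{jl}/d_{j*} for every demand group g_l^j ∈ G_j, and x_{jr} = 0 for r ∉ ∪_l g_l^j, where w_{j*}/d_{j*} = min_l w_{jl}/d_{jl}. Then agent i's Leontief utility of agent j's allocation rescaled by the weight ratios, u_i(x̃) where x̃_r = x_{jr}·w_{il}/w_{jl} for r ∈ g_l^i, is at most y_j · w_{i*}/d_{i*}. -/

import Mathlib

/-!
Let `l*` be a meta-type minimising `wᵢₗ / dᵢₗ`. Since the demand groups of both agents sit inside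
the pairwise disjoint meta-types and `xⱼ` vanishes off `j`'s groups, the part of `xⱼ` lying in
`gᵢ l*` is at most `j`'s whole group sum in `l*`, namely `yⱼ (wⱼ*/dⱼ*) dⱼₗ* ≤ yⱼ wⱼₗ*`. Rescaling by
`wᵢₗ*/wⱼₗ*` and dividing by `dᵢₗ*` bounds the `l*` term of `i`'s Leontief utility, hence the
utility itself, by `yⱼ wᵢₗ*/dᵢₗ* = yⱼ (wᵢ*/dᵢ*)`.
-/

open Finset Function

theorem Finset.sum_le_sum_of_ne_zero_of_nonneg {ι M : Type*} [AddCommMonoid M] [PartialOrder M]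
    [IsOrderedAddMonoid M] {s t : Finset ι} {f : ι → M} (hf : ∀ i ∈ t, 0 ≤ f i)
    (h : ∀ i ∈ s, f i ≠ 0 → i ∈ t) : ∑ i ∈ s, f i ≤ ∑ i ∈ t, f i := by
  classical
  rw [← sum_filter_ne_zero s]
  refine sum_le_sum_of_subset_of_nonneg (fun i hi => ?_) fun i hi _ => hf i hi
  rw [mem_filter] at hi
  exact h i hi.1 hi.2

theorem mem_of_ne_zero_of_support_subset {L R M : Type*} [Zero M] {Ω gi gj : L → Finset R}
    (hΩ : Pairwise (Disjoint on Ω)) (hgi : ∀ l, gi l ⊆ Ω l) (hgj : ∀ l, gj l ⊆ Ω l) {x : R → M}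
    (hsupp : ∀ r, (∀ l, r ∉ gj l) → x r = 0) {l : L} {r : R} (hr : r ∈ gi l) (hx : x r ≠ 0) :
    r ∈ gj l := by
  obtain ⟨l', hl'⟩ : ∃ l', r ∈ gj l' := by
    by_contra! h
    exact hx (hsupp r h)
  obtain rfl : l' = l := hΩ.eq (not_disjoint_iff.2 ⟨r, hgj l' hl', hgi l hr⟩)
  exact hl'

theorem envy_bound_general {L R : Type} [Fintype L] [Nonempty L]
    (Ω : L → Finset R) (hΩ : ∀ l l', l ≠ l' → Disjoint (Ω l) (Ω l'))
    (gi gj : L → Finset R) (hgi : ∀ l, gi l ⊆ Ω l) (hgj : ∀ l, gj l ⊆ Ω l)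
    (di dj wi wj : L → ℝ)
    (hdi : ∀ l, 0 < di l) (hdj : ∀ l, 0 < dj l)
    (hwi : ∀ l, 0 < wi l) (hwj : ∀ l, 0 < wj l)
    (xj : R → ℝ) (hx0 : ∀ r, 0 ≤ xj r)
    (yj : ℝ)
    -- agent j's allocation constraints are met with equality
    (heq : ∀ l, ∑ r ∈ gj l, xj r =
      yj * (Finset.univ.inf' Finset.univ_nonempty fun l' => wj l' / dj l') * dj l)
    -- agent j's allocation is supported on its demand groups
    (hsupp : ∀ r : R, (∀ l, r ∉ gj l) → xj r = 0) :
    (Finset.univ.inf' Finset.univ_nonempty fun l =>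
        (1 / di l) * ∑ r ∈ gi l, xj r * (wi l / wj l)) ≤
      yj * (Finset.univ.inf' Finset.univ_nonempty fun l => wi l / di l) := by
  set mj := univ.inf' univ_nonempty fun l => wj l / dj l
  have hmj : 0 < mj := (lt_inf'_iff _).2 fun l _ => div_pos (hwj l) (hdj l)
  have hyj : 0 ≤ yj := by
    obtain ⟨l⟩ := ‹Nonempty L›
    refine nonneg_of_mul_nonneg_left ?_ (mul_pos hmj (hdj l))
    rw [← mul_assoc, ← heq l]
    exact sum_nonneg fun r _ => hx0 r
  have hgroup (l : L) : ∑ r ∈ gi l, xj r ≤ yj * wj l :=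
    calc ∑ r ∈ gi l, xj r ≤ ∑ r ∈ gj l, xj r :=
          sum_le_sum_of_ne_zero_of_nonneg (fun r _ => hx0 r)
            fun _ hr => mem_of_ne_zero_of_support_subset hΩ hgi hgj hsupp hr
      _ = yj * (mj * dj l) := by rw [heq l, mul_assoc]
      _ ≤ yj * wj l := mul_le_mul_of_nonneg_left
          ((le_div_iff₀ (hdj l)).1 (inf'_le _ (mem_univ l))) hyj
  obtain ⟨l, -, hl⟩ := exists_mem_eq_inf' univ_nonempty fun l => wi l / di l
  calc _ ≤ 1 / di l * ∑ r ∈ gi l, xj r * (wi l / wj l) := inf'_le _ (mem_univ l)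
    _ = (∑ r ∈ gi l, xj r) / wj l * (wi l / di l) := by rw [← sum_mul]; ring
    _ ≤ yj * (wi l / di l) := mul_le_mul_of_nonneg_right
        ((div_le_iff₀ (hwj l)).2 (hgroup l)) (div_pos (hwi l) (hdi l)).le
    _ = _ := by rw [hl]

/-- Weighted envy-freeness bound: if agent `j`'s allocation exactly meets its DRF-MT allocation
constraints (group sum `= yj * (wj*/dj*) * djl` for each meta-type) and is supported on `j`'s
demand groups, then agent `i`'s Leontief utility of `j`'s allocation rescaled by the weight
ratios is at most `yj * (wi*/di*)`. -/
theorem envy_bound {L R : Type} [Fintype L] [Nonempty L] [Fintype R] [DecidableEq R]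
    (Ω : L → Finset R) (hΩ : ∀ l l', l ≠ l' → Disjoint (Ω l) (Ω l'))
    (gi gj : L → Finset R) (hgi : ∀ l, gi l ⊆ Ω l) (hgj : ∀ l, gj l ⊆ Ω l)
    (di dj wi wj : L → ℝ)
    (hdi : ∀ l, 0 < di l) (hdj : ∀ l, 0 < dj l)
    (hwi : ∀ l, 0 < wi l) (hwj : ∀ l, 0 < wj l)
    (xj : R → ℝ) (hx0 : ∀ r, 0 ≤ xj r)
    (yj : ℝ)
    -- agent j's allocation constraints are met with equality
    (heq : ∀ l, ∑ r ∈ gj l, xj r =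
      yj * (Finset.univ.inf' Finset.univ_nonempty fun l' => wj l' / dj l') * dj l)
    -- agent j's allocation is supported on its demand groups
    (hsupp : ∀ r : R, (∀ l, r ∉ gj l) → xj r = 0) :
    (Finset.univ.inf' Finset.univ_nonempty fun l =>
        (1 / di l) * ∑ r ∈ gi l, xj r * (wi l / wj l)) ≤
      yj * (Finset.univ.inf' Finset.univ_nonempty fun l => wi l / di l) :=
  envy_bound_general Ω hΩ gi gj hgi hgj di dj wi wj hdi hdj hwi hwj xj hx0 yj heq hsupp
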